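/- For m = 2^S, N = mM, and all 1 ≤ k ≤ S, the partial product A_k · A_{k-1} ⋯ A_1 equals I_{2^{S-k}} ⊗ (1/2^k)J_{2^k} ⊗ (1/M)J_M. -/

import Mathlib

open Matrix Kronecker

/-- The k×k all-ones matrix. -/
noncomputable def J (k : ℕ) : Matrix (Fin k) (Fin k) ℝ := Matrix.of fun _ _ => 1

/-- The matrix `A_s := I_{2^{S-s}} ⊗ (1/2)J_2 ⊗ I_{2^{s-1}} ⊗ (1/M)J_M`
on the product index type. -/
noncomputable def Akron (S M s : ℕ) :
    Matrix (((Fin (2^(S-s)) × Fin 2) × Fin (2^(s-1))) × Fin M)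
           (((Fin (2^(S-s)) × Fin 2) × Fin (2^(s-1))) × Fin M) ℝ :=
  (((1 : Matrix (Fin (2^(S-s))) (Fin (2^(S-s))) ℝ) ⊗ₖ ((1/2 : ℝ) • J 2)) ⊗ₖ
      (1 : Matrix (Fin (2^(s-1))) (Fin (2^(s-1))) ℝ)) ⊗ₖ ((1/(M:ℝ)) • J M)

/-- Flattening equivalence for a triple Kronecker product (row-major order). -/
def bEquiv (a b c : ℕ) : (Fin a × Fin b) × Fin c ≃ Fin (a * b * c) :=
  (finProdFinEquiv.prodCongr (Equiv.refl (Fin c))).trans finProdFinEquiv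

/-- Flattening equivalence for a fourfold Kronecker product (row-major order). -/
def aEquiv (a b c d : ℕ) : ((Fin a × Fin b) × Fin c) × Fin d ≃ Fin (a * b * c * d) :=
  ((bEquiv a b c).prodCongr (Equiv.refl (Fin d))).trans finProdFinEquiv

lemma size_eq (S s M : ℕ) (h1 : 1 ≤ s) (h2 : s ≤ S) :
    2^(S-s) * 2 * 2^(s-1) * M = 2^S * M := by
  have hS : S - s + (s - 1) + 1 = S := by omega
  calc 2^(S-s) * 2 * 2^(s-1) * M = (2^(S-s) * 2^(s-1) * 2^1) * M := by ring
    _ = 2^(S - s + (s-1) + 1) * M := by rw [pow_add, pow_add]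
    _ = 2^S * M := by rw [hS]

/-- The matrix `A_s` viewed as an `N × N` matrix, `N = 2^S·M`, with the rows and
columns ordered consistently with the Kronecker (row-major) structure. -/
noncomputable def Amat (S M s : ℕ) : Matrix (Fin (2^S * M)) (Fin (2^S * M)) ℝ :=
  if h : 1 ≤ s ∧ s ≤ S then
    Matrix.reindex
      ((aEquiv (2^(S-s)) 2 (2^(s-1)) M).trans (finCongr (size_eq S s M h.1 h.2)))
      ((aEquiv (2^(S-s)) 2 (2^(s-1)) M).trans (finCongr (size_eq S s M h.1 h.2)))
      (Akron S M s)
  else 0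

lemma size_eqB (S s : ℕ) (h1 : 1 ≤ s) (h2 : s ≤ S) :
    2^(S-s) * 2 * 2^(s-1) = 2^S := by
  have := size_eq S s 1 h1 h2
  simpa using this

/-- The matrix `B_s := I_{2^{S-s}} ⊗ (1/2)J_2 ⊗ I_{2^{s-1}}` viewed as an
`m × m` matrix, `m = 2^S`. -/
noncomputable def Bmat (S s : ℕ) : Matrix (Fin (2^S)) (Fin (2^S)) ℝ :=
  if h : 1 ≤ s ∧ s ≤ S then
    Matrix.reindex
      ((bEquiv (2^(S-s)) 2 (2^(s-1))).trans (finCongr (size_eqB S s h.1 h.2)))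
      ((bEquiv (2^(S-s)) 2 (2^(s-1))).trans (finCongr (size_eqB S s h.1 h.2)))
      (((1 : Matrix (Fin (2^(S-s))) (Fin (2^(S-s))) ℝ) ⊗ₖ ((1/2 : ℝ) • J 2)) ⊗ₖ
        (1 : Matrix (Fin (2^(s-1))) (Fin (2^(s-1))) ℝ))
  else 0

lemma size_eqC (S k M : ℕ) (h : k ≤ S) : 2^(S-k) * 2^k * M = 2^S * M := by
  have hS : S - k + k = S := by omega
  rw [← pow_add, hS]

/-- The matrix `I_{2^{S-k}} ⊗ (1/2^k)J_{2^k} ⊗ (1/M)J_M` viewed as an `N × N`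
matrix, `N = 2^S·M`. -/
noncomputable def Cmat (S M k : ℕ) : Matrix (Fin (2^S * M)) (Fin (2^S * M)) ℝ :=
  if h : k ≤ S then
    Matrix.reindex
      ((bEquiv (2^(S-k)) (2^k) M).trans (finCongr (size_eqC S k M h)))
      ((bEquiv (2^(S-k)) (2^k) M).trans (finCongr (size_eqC S k M h)))
      (((1 : Matrix (Fin (2^(S-k))) (Fin (2^(S-k))) ℝ) ⊗ₖ ((1/(2^k : ℝ)) • J (2^k))) ⊗ₖ
        ((1/(M:ℝ)) • J M))
  else 0

/-
Pull everything back along the row-major flattening of the index set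
`((2^(S-k-1) × 2) × 2^k) × M` of `A_{k+1}`. There `C_k = I ⊗ I_2 ⊗ (1/2^k)J ⊗ (1/M)J` and
`C_{k+1} = I ⊗ (1/2)J_2 ⊗ (1/2^k)J ⊗ (1/M)J` have the same Kronecker shape as
`A_{k+1} = I ⊗ (1/2)J_2 ⊗ I ⊗ (1/M)J`, so the mixed-product rule and the idempotence of `(1/M)J_M`
give `A_{k+1} C_k = C_{k+1}`. Induction on `k` from `A_1 = C_1` finishes.
-/

lemma J_mul_self (n : ℕ) : J n * J n = (n : ℝ) • J n := by
  ext i j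
  simp [_root_.J, Matrix.mul_apply]

lemma one_div_smul_J_mul_self (n : ℕ) :
    ((1 / (n : ℝ)) • J n) * ((1 / (n : ℝ)) • J n) = (1 / (n : ℝ)) • J n := by
  rw [smul_mul_smul_comm, J_mul_self, smul_smul]
  congr 1
  rcases eq_or_ne (n : ℝ) 0 with h | h
  · simp [h]
  · field_simp

def flattenEquiv (S M k : ℕ) (hk : k + 1 ≤ S) :
    ((Fin (2^(S-(k+1))) × Fin 2) × Fin (2^k)) × Fin M ≃ Fin (2^S * M) :=
  (aEquiv _ 2 (2^k) M).trans (finCongr (size_eq S (k+1) M (by omega) hk))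

lemma flattenEquiv_val (S M k : ℕ) (hk : k + 1 ≤ S)
    (p : ((Fin (2^(S-(k+1))) × Fin 2) × Fin (2^k)) × Fin M) :
    (flattenEquiv S M k hk p : ℕ) = p.2 + M * (p.1.2 + 2^k * (p.1.1.2 + 2 * p.1.1.1)) := by
  simp [flattenEquiv, aEquiv, bEquiv]

lemma Amat_succ_eq_reindex (S M k : ℕ) (hk : k + 1 ≤ S) :
    Amat S M (k+1) = reindex (flattenEquiv S M k hk) (flattenEquiv S M k hk) (Akron S M (k+1)) := by
  rw [Amat, dif_pos ⟨by omega, hk⟩]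
  rfl

lemma Cmat_eq_reindex (S M k : ℕ) (hk : k + 1 ≤ S) :
    Cmat S M k = reindex (flattenEquiv S M k hk) (flattenEquiv S M k hk)
      ((((1 : Matrix (Fin (2^(S-(k+1)))) (Fin (2^(S-(k+1)))) ℝ) ⊗ₖ
        (1 : Matrix (Fin 2) (Fin 2) ℝ)) ⊗ₖ
        ((1/(2^k : ℝ)) • J (2^k))) ⊗ₖ ((1/(M:ℝ)) • J M)) := by
  have hsize : 2^(S-(k+1)) * 2 = 2^(S-k) := by
    rw [← pow_succ]; congr 1; omega
  have hsymm : ∀ p, ((bEquiv (2^(S-k)) (2^k) M).trans (finCongr (size_eqC S k M (by omega)))).symm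
      (flattenEquiv S M k hk p) = ((finCongr hsize (finProdFinEquiv p.1.1), p.1.2), p.2) := by
    intro p
    rw [Equiv.symm_apply_eq]
    ext
    simp [flattenEquiv_val, bEquiv]
  ext i j
  obtain ⟨p, rfl⟩ := (flattenEquiv S M k hk).surjective i
  obtain ⟨q, rfl⟩ := (flattenEquiv S M k hk).surjective j
  rw [Cmat, dif_pos (by omega)]
  simp only [reindex_apply, submatrix_apply, hsymm, Equiv.symm_apply_apply]
  simp [kroneckerMap_apply, one_apply]

lemma Cmat_succ_eq_reindex (S M k : ℕ) (hk : k + 1 ≤ S) :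
    Cmat S M (k+1) = reindex (flattenEquiv S M k hk) (flattenEquiv S M k hk)
      ((((1 : Matrix (Fin (2^(S-(k+1)))) (Fin (2^(S-(k+1)))) ℝ) ⊗ₖ ((1/2 : ℝ) • J 2)) ⊗ₖ
        ((1/(2^k : ℝ)) • J (2^k))) ⊗ₖ ((1/(M:ℝ)) • J M)) := by
  have hsize : 2 * 2^k = 2^(k+1) := (pow_succ' 2 k).symm
  have hsymm : ∀ p,
      ((bEquiv (2^(S-(k+1))) (2^(k+1)) M).trans (finCongr (size_eqC S (k+1) M hk))).symm
        (flattenEquiv S M k hk p) =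
      ((p.1.1.1, finCongr hsize (finProdFinEquiv (p.1.1.2, p.1.2))), p.2) := by
    intro p
    rw [Equiv.symm_apply_eq]
    ext
    simp only [Equiv.trans_apply, finCongr_apply, Fin.val_cast, bEquiv, flattenEquiv_val,
      finProdFinEquiv_apply_val, Equiv.prodCongr_apply, Prod.map, Equiv.refl_apply]
    ring
  ext i j
  obtain ⟨p, rfl⟩ := (flattenEquiv S M k hk).surjective i
  obtain ⟨q, rfl⟩ := (flattenEquiv S M k hk).surjective j
  rw [Cmat, dif_pos hk]
  simp only [reindex_apply, submatrix_apply, hsymm, Equiv.symm_apply_apply]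
  simp only [one_div, _root_.J, smul_of, finCongr_apply, kroneckerMap_apply, one_apply, of_apply,
    Pi.smul_apply, smul_eq_mul, mul_one, ite_mul, one_mul, zero_mul]
  split_ifs <;> ring

lemma Amat_succ_mul_Cmat (S M k : ℕ) (hk : k + 1 ≤ S) :
    Amat S M (k+1) * Cmat S M k = Cmat S M (k+1) := by
  rw [Amat_succ_eq_reindex S M k hk, Cmat_eq_reindex S M k hk, Cmat_succ_eq_reindex S M k hk,
    reindex_apply, reindex_apply, reindex_apply, submatrix_mul_equiv, Akron,
    ← mul_kronecker_mul, ← mul_kronecker_mul, ← mul_kronecker_mul, one_div_smul_J_mul_self]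
  simp only [Matrix.mul_one, Matrix.one_mul]

lemma Amat_one_eq_Cmat_one (S M : ℕ) (hS : 1 ≤ S) : Amat S M 1 = Cmat S M 1 := by
  have hJ : ((1 / (2^0 : ℝ)) • _root_.J (2^0) : Matrix (Fin (2^0)) (Fin (2^0)) ℝ) = 1 := by
    ext i j
    obtain rfl : i = j := Subsingleton.elim (α := Fin 1) i j
    simp [_root_.J]
  rw [Amat_succ_eq_reindex S M 0 hS, Cmat_succ_eq_reindex S M 0 hS, hJ]
  rfl

theorem stmt6_general (S M : ℕ) (k : ℕ) (hk1 : 1 ≤ k) (hkS : k ≤ S) :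
    (List.ofFn (fun t : Fin k => Amat S M (k - (t : ℕ)))).prod = Cmat S M k := by
  induction k, hk1 using Nat.le_induction with
  | base => simpa using Amat_one_eq_Cmat_one S M hkS
  | succ k _ ih =>
    rw [List.ofFn_succ, List.prod_cons]
    simp only [Fin.val_zero, Nat.sub_zero, Fin.val_succ, Nat.add_sub_add_right]
    rw [ih (by omega), Amat_succ_mul_Cmat S M k hkS]

/-- for all `1 ≤ k ≤ S`, the partial product `A_k · A_{k-1} ⋯ A_1`
equals `I_{2^{S-k}} ⊗ (1/2^k)J_{2^k} ⊗ (1/M)J_M`. -/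
theorem stmt6 (S M : ℕ) (hS : 0 < S) (hM : 0 < M) (k : ℕ) (hk1 : 1 ≤ k) (hkS : k ≤ S) :
    (List.ofFn (fun t : Fin k => Amat S M (k - (t : ℕ)))).prod = Cmat S M k :=
  stmt6_general S M k hk1 hkS
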